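/- arXiv:2401.04292 — 3 statements merged into one kernel-verified Lean document; each statement's English description precedes it below -/
import Mathlib

section
/- Let (Ω, P) be a probability space and q : Ω × ℝ → ℝ a stochastic process such that for some ε > 0, P(|q(x)| ≥ λ) ≲ e^{−ελ³} for every x and λ > 0, and P(|q(x) − q(x')| ≥ λ) ≲ exp(−λ²/(2|x − x'|)) whenever |x − x'| ≤ 1. Then for every λ ≥ 1 and interval J of length at most λ⁻¹, P(sup_{x∈J} |q(x)| > λ) ≲ e^{−c λ³} for some c > 0 depending only on ε. -/
open MeasureTheory
open scoped ENNReal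

lemma aux_cube_le_exp (x : ℝ) (hx : 0 ≤ x) : (x/3)^3 ≤ Real.exp x := by
  calc (x/3)^3 ≤ (1 + x/3)^3 := by
        apply pow_le_pow_left₀ (by positivity) (by linarith)
    _ ≤ (Real.exp (x/3))^3 := by
        apply pow_le_pow_left₀ (by positivity)
        linarith [Real.add_one_le_exp (x/3)]
    _ = Real.exp x := by
        rw [← Real.exp_nat_mul]; ring_nf

lemma geom_dom (n : ℕ) : (2:ℝ)^n * Real.exp (-((32/25:ℝ)^n / 200)) ≤
    216000000 * (15625/16384:ℝ)^n := by
  have hr : (0:ℝ) < (32/25:ℝ)^n := by positivity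
  have h2 := aux_cube_le_exp ((32/25:ℝ)^n/200) (by positivity)
  have h3 : (0:ℝ) < (((32/25:ℝ)^n/200)/3)^3 := by positivity
  have h4 : Real.exp (-((32/25:ℝ)^n / 200)) ≤ ((((32/25:ℝ)^n/200)/3)^3)⁻¹ := by
    rw [Real.exp_neg]
    exact inv_anti₀ h3 h2
  have h5 : ((((32/25:ℝ)^n/200)/3)^3)⁻¹ = 216000000 * ((15625/32768:ℝ))^n := by
    have e1 : (((32/25:ℝ)^n/200)/3)^3 = ((32/25:ℝ)^3)^n / 216000000 := by
      rw [← pow_right_comm]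
      field_simp
      ring
    rw [e1]
    rw [inv_div]
    rw [div_eq_mul_inv, ← inv_pow]
    norm_num
  have hge : (0:ℝ) ≤ (15625/32768:ℝ)^n := by positivity
  calc (2:ℝ)^n * Real.exp (-((32/25:ℝ)^n / 200))
      ≤ (2:ℝ)^n * (216000000 * ((15625/32768:ℝ))^n) := by
        rw [← h5]; exact mul_le_mul_of_nonneg_left h4 (by positivity)
    _ = 216000000 * (15625/16384:ℝ)^n := by
        rw [mul_comm ((2:ℝ)^n), mul_assoc, ← mul_pow]; norm_num

lemma chain_bound {a b lam : ℝ} (hd : 0 < b - a) (hlam : 0 < lam)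
    (f : ℝ → ℝ) (hf : Continuous f)
    (hA : |f a| < lam / 4) (hB : |f b - f a| < lam / 4)
    (hS : ∀ n k : ℕ, k < 2 ^ n →
      |f (a + (2 * (k:ℝ) + 1) * (b - a) / 2 ^ (n + 1)) - f (a + (k:ℝ) * (b - a) / 2 ^ n)| <
        lam * (4 / 5) ^ n / 10)
    {x : ℝ} (hx : x ∈ Set.Icc a b) : |f x| ≤ lam := by
  have key : ∀ n, ∀ k : ℕ, k ≤ 2 ^ n →
      |f (a + (k:ℝ) * (b - a) / 2 ^ n)| ≤ lam - lam / 2 * (4 / 5) ^ n := by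
    intro n
    induction n with
    | zero =>
      intro k hk
      interval_cases k
      · norm_num; linarith
      · have hpt : a + ((1:ℕ):ℝ) * (b - a) / 2 ^ 0 = b := by push_cast; ring
        rw [hpt]
        have := abs_sub_abs_le_abs_sub (f b) (f a)
        norm_num
        linarith
    | succ n ih =>
      intro k hk
      have hgn : (0:ℝ) ≤ (4/5:ℝ)^n := by positivity
      rcases Nat.even_or_odd k with ⟨j, hj⟩ | ⟨j, hj⟩
      · subst hj
        have hj2 : j ≤ 2^n := by
          have : (2:ℕ)^(n+1) = 2*2^n := by rw [pow_succ]; ring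
          omega
        have hpt : a + ((j + j : ℕ):ℝ) * (b - a) / 2 ^ (n+1) = a + (j:ℝ) * (b - a) / 2 ^ n := by
          push_cast [pow_succ]
          field_simp
          ring
        rw [hpt]
        have h1 := ih j hj2
        have h45 : lam/2 * (4/5:ℝ)^(n+1) ≤ lam/2 * (4/5)^n := by
          rw [pow_succ]; nlinarith
        linarith
      · subst hj
        have hj2 : j < 2^n := by
          have : (2:ℕ)^(n+1) = 2*2^n := by rw [pow_succ]; ring
          omega
        have h1 := hS n j hj2
        have h2 := ih j (le_of_lt hj2)
        have habs := abs_sub_abs_le_abs_sub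
          (f (a + (2 * (j:ℝ) + 1) * (b - a) / 2 ^ (n + 1))) (f (a + (j:ℝ) * (b - a) / 2 ^ n))
        have hpt : a + ((2*j + 1 : ℕ):ℝ) * (b - a) / 2 ^ (n+1)
            = a + (2 * (j:ℝ) + 1) * (b - a) / 2 ^ (n + 1) := by push_cast; ring
        have hps : (4/5:ℝ)^(n+1) = (4/5)^n * (4/5) := pow_succ _ _
        rw [hpt, hps]
        nlinarith [habs, h1, h2]
  obtain ⟨hax, hxb⟩ := hx
  set d := b - a with hdd
  have hxa0 : 0 ≤ x - a := by linarith
  set k : ℕ → ℕ := fun n => ⌊(x - a) * 2^n / d⌋₊ with hk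
  have hkle : ∀ n, k n ≤ 2^n := by
    intro n
    have h2n : (0:ℝ) < 2^n := by positivity
    have h1 : (x - a) * 2^n / d ≤ ((2^n : ℕ) : ℝ) := by
      rw [div_le_iff₀ hd]
      push_cast
      nlinarith
    calc k n ≤ ⌊((2^n:ℕ):ℝ)⌋₊ := Nat.floor_le_floor h1
      _ = 2^n := Nat.floor_natCast _
  have h2n : ∀ n : ℕ, (0:ℝ) < 2^n := fun n => by positivity
  have hb1 : ∀ n, a + (k n : ℝ) * d / 2^n ≤ x := by
    intro n
    have := Nat.floor_le (show (0:ℝ) ≤ (x - a) * 2^n / d by positivity)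
    rw [le_div_iff₀ hd] at this
    have this2 : ((k n : ℕ):ℝ) * d ≤ (x - a) * 2^n := this
    have h3 : (k n : ℝ) * d / 2^n ≤ x - a := by
      rw [div_le_iff₀ (h2n n)]
      linarith [this2]
    linarith
  have hb2 : ∀ n, x - d * (1/2:ℝ)^n ≤ a + (k n : ℝ) * d / 2^n := by
    intro n
    have h1 : (x - a) * 2^n / d < (k n : ℝ) + 1 := Nat.lt_floor_add_one _
    rw [div_lt_iff₀ hd] at h1
    have h4 : d * (1/2:ℝ)^n = d / 2^n := by
      rw [div_pow]; ring
    rw [h4]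
    have h6 : x - a ≤ ((k n : ℝ) * d + d)/2^n := by
      rw [le_div_iff₀ (h2n n)]
      linarith
    have h7 : ((k n : ℝ)*d + d)/2^n = (k n : ℝ)*d/2^n + d/2^n := add_div _ _ _
    linarith
  have htend : Filter.Tendsto (fun n => a + (k n : ℝ) * d / 2^n) Filter.atTop (nhds x) := by
    have h0 : Filter.Tendsto (fun n : ℕ => x - d * (1/2:ℝ)^n) Filter.atTop (nhds x) := by
      have hp := tendsto_pow_atTop_nhds_zero_of_lt_one (show (0:ℝ) ≤ 1/2 by norm_num)
        (show (1/2:ℝ) < 1 by norm_num)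
      have := Filter.Tendsto.const_sub x ((hp.const_mul d))
      simpa using this
    exact tendsto_of_tendsto_of_tendsto_of_le_of_le h0 tendsto_const_nhds hb2 hb1
  have habstend : Filter.Tendsto (fun n => |f (a + (k n : ℝ) * d / 2^n)|)
      Filter.atTop (nhds (|f x|)) := ((hf.tendsto x).comp htend).abs
  refine le_of_tendsto habstend (Filter.Eventually.of_forall fun n => ?_)
  have h5 := key n (k n) (hkle n)
  have h6 : (0:ℝ) ≤ lam/2 * (4/5)^n := by positivity
  linarith

set_option maxHeartbeats 1000000 in
/-- Chaining bound: if a continuous process `q` satisfies the one-point tail bound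
`P(|q(x)| ≥ λ) ≲ e^{−ελ³}` and the increment bound
`P(|q(x) − q(x')| ≥ λ) ≲ exp(−λ²/(2|x − x'|))` for `|x − x'| ≤ 1`, then for
`λ ≥ 1` and intervals `J` of length at most `λ⁻¹`,
`P(sup_{x∈J} |q(x)| > λ) ≲ e^{−cλ³}`. -/
theorem stmt8 {Ω : Type*} [MeasurableSpace Ω] (P : Measure Ω) [IsProbabilityMeasure P]
    (q : ℝ → Ω → ℝ) (hmeas : ∀ x, Measurable (q x))
    (hcont : ∀ ω, Continuous fun x => q x ω)
    (ε C₁ C₂ : ℝ) (hε : 0 < ε)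
    (hone : ∀ x lam : ℝ, 0 < lam →
      P {ω | lam ≤ |q x ω|} ≤ ENNReal.ofReal (C₁ * Real.exp (-ε * lam ^ 3)))
    (htwo : ∀ x x' lam : ℝ, 0 < lam → |x - x'| ≤ 1 →
      P {ω | lam ≤ |q x ω - q x' ω|}
        ≤ ENNReal.ofReal (C₂ * Real.exp (-(lam ^ 2) / (2 * |x - x'|)))) :
    ∃ c : ℝ, 0 < c ∧ ∃ C₃ : ℝ, ∀ lam : ℝ, 1 ≤ lam → ∀ a b : ℝ, b - a ≤ lam⁻¹ →
      P {ω | ∃ x ∈ Set.Icc a b, lam < |q x ω|}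
        ≤ ENNReal.ofReal (C₃ * Real.exp (-c * lam ^ 3)) := by
  have hC1 : ∀ x l : ℝ, 0 < l →
      P {ω | l ≤ |q x ω|} ≤ ENNReal.ofReal (max C₁ 0 * Real.exp (-ε * l ^ 3)) := by
    intro x l hl
    refine (hone x l hl).trans (ENNReal.ofReal_le_ofReal ?_)
    exact mul_le_mul_of_nonneg_right (le_max_left _ _) (Real.exp_pos _).le
  have hC2 : ∀ x x' l : ℝ, 0 < l → |x - x'| ≤ 1 →
      P {ω | l ≤ |q x ω - q x' ω|}
        ≤ ENNReal.ofReal (max C₂ 0 * Real.exp (-(l ^ 2) / (2 * |x - x'|))) := by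
    intro x x' l hl hxx
    refine (htwo x x' l hl hxx).trans (ENNReal.ofReal_le_ofReal ?_)
    exact mul_le_mul_of_nonneg_right (le_max_left _ _) (Real.exp_pos _).le
  set c : ℝ := min (ε/64) (1/200) with hcdef
  have hc0 : 0 < c := lt_min (by positivity) (by norm_num)
  set K : ℝ := 216000000 * (1 - (15625/16384:ℝ))⁻¹ with hKdef
  have hK0 : 0 < K := by rw [hKdef]; norm_num
  refine ⟨c, hc0, max C₁ 0 + max C₂ 0 * (1 + K), ?_⟩
  intro lam hlam a b hab
  have hlam0 : (0:ℝ) < lam := by linarith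
  have hlam3 : (1:ℝ) ≤ lam^3 := one_le_pow₀ hlam
  have hinv : lam * lam⁻¹ = 1 := mul_inv_cancel₀ (ne_of_gt hlam0)
  have hinvpos : (0:ℝ) < lam⁻¹ := inv_pos.mpr hlam0
  have hinvle : lam⁻¹ ≤ 1 := by nlinarith
  rcases le_or_gt (b - a) 0 with hba | hba
  · -- degenerate interval
    have hsub : {ω | ∃ x ∈ Set.Icc a b, lam < |q x ω|} ⊆ {ω | lam ≤ |q a ω|} := by
      rintro ω ⟨x, ⟨hx1, hx2⟩, hqx⟩
      have hxa : x = a := le_antisymm (by linarith) hx1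
      subst hxa
      exact le_of_lt hqx
    refine ((measure_mono hsub).trans (hC1 a lam hlam0)).trans (ENNReal.ofReal_le_ofReal ?_)
    have h1 : Real.exp (-ε * lam^3) ≤ Real.exp (-c*lam^3) := by
      rw [Real.exp_le_exp]
      have hce : c ≤ ε := le_trans (min_le_left _ _) (by linarith)
      nlinarith [pow_pos hlam0 3]
    have h2 : max C₁ 0 * Real.exp (-ε * lam^3) ≤ max C₁ 0 * Real.exp (-c*lam^3) :=
      mul_le_mul_of_nonneg_left h1 (le_max_right _ _)
    have h3 : (0:ℝ) ≤ max C₂ 0 * (1+K) * Real.exp (-c*lam^3) := by positivity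
    nlinarith [h2, h3]
  · -- main case
    set d : ℝ := b - a with hddef
    have hd1 : d ≤ 1 := le_trans hab hinvle
    have hdlam : lam ≤ d⁻¹ := by
      have := inv_anti₀ hba hab
      rwa [inv_inv] at this
    -- events
    set A : Set Ω := {ω | lam/4 ≤ |q a ω|} with hAdef
    set B : Set Ω := {ω | lam/4 ≤ |q b ω - q a ω|} with hBdef
    set S : (n : ℕ) → Fin (2^n) → Set Ω := fun n k =>
      {ω | lam*(4/5)^n/10 ≤ |q (a + (2*((k:ℕ):ℝ)+1)*d/2^(n+1)) ω - q (a + ((k:ℕ):ℝ)*d/2^n) ω|}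
      with hSdef
    have hincl : {ω | ∃ x ∈ Set.Icc a b, lam < |q x ω|} ⊆ (A ∪ B) ∪ ⋃ n, ⋃ k, S n k := by
      intro ω hω
      by_contra hnot
      simp only [hAdef, hBdef, hSdef, Set.mem_union, Set.mem_iUnion, Set.mem_setOf_eq,
        not_or, not_exists, not_le] at hnot
      obtain ⟨⟨hA', hB'⟩, hS'⟩ := hnot
      obtain ⟨x, hxmem, hqx⟩ := hω
      have hbd := chain_bound hba hlam0 (fun y => q y ω) (hcont ω) hA' hB'
        (fun n k hk => by simpa using hS' n ⟨k, hk⟩) hxmem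
      exact absurd hqx (not_lt.mpr hbd)
    -- individual bounds
    have hPA : P A ≤ ENNReal.ofReal (max C₁ 0 * Real.exp (-c*lam^3)) := by
      refine (hC1 a (lam/4) (by positivity)).trans (ENNReal.ofReal_le_ofReal ?_)
      refine mul_le_mul_of_nonneg_left ?_ (le_max_right _ _)
      have h64 : -ε*(lam/4)^3 = -(ε/64)*lam^3 := by ring
      rw [h64, Real.exp_le_exp]
      linarith [mul_le_mul_of_nonneg_right (min_le_left (ε/64) (1/200:ℝ))
        (le_of_lt (pow_pos hlam0 3))]
    have hPB : P B ≤ ENNReal.ofReal (max C₂ 0 * Real.exp (-c*lam^3)) := by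
      have habs : |b - a| = d := abs_of_pos hba
      refine (hC2 b a (lam/4) (by positivity) (by rw [habs]; exact hd1)).trans
        (ENNReal.ofReal_le_ofReal ?_)
      refine mul_le_mul_of_nonneg_left ?_ (le_max_right _ _)
      rw [habs, Real.exp_le_exp]
      have h31 : lam^3 * lam⁻¹ = lam^2 := by
        field_simp
      have hcm : c*lam^3 ≤ (lam/4)^2/(2*d) := by
        rw [le_div_iff₀ (by positivity)]
        have hc200 : c ≤ 1/200 := min_le_right _ _
        have key1 : c*lam^3*d ≤ c*lam^3*lam⁻¹ :=
          mul_le_mul_of_nonneg_left hab (by positivity)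
        have key2 : c*lam^3*lam⁻¹ = c*lam^2 := by rw [mul_assoc, h31]
        nlinarith [sq_nonneg lam, pow_pos hlam0 2]
      have : -((lam/4)^2)/(2*d) = -((lam/4)^2/(2*d)) := by ring
      rw [this]
      linarith
    have hr1 : ∀ n : ℕ, (1:ℝ) ≤ (32/25:ℝ)^n := fun n =>
      one_le_pow₀ (by norm_num)
    have e1 : ∀ n : ℕ, ((4/5:ℝ)^n)^2 * (2:ℝ)^n = (32/25:ℝ)^n := by
      intro n
      rw [pow_right_comm, ← mul_pow]
      norm_num
    have hPS : ∀ n : ℕ, ∀ k : Fin (2^n), P (S n k) ≤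
        ENNReal.ofReal (max C₂ 0 * (Real.exp (-(lam^3)/200) *
          Real.exp (-((32/25:ℝ)^n)/200))) := by
      intro n k
      have hdiff : (a + (2*((k:ℕ):ℝ)+1)*d/2^(n+1)) - (a + ((k:ℕ):ℝ)*d/2^n) = d/2^(n+1) := by
        rw [pow_succ]
        field_simp
        ring
      have hpos : (0:ℝ) < d/2^(n+1) := by positivity
      have habs2 : |(a + (2*((k:ℕ):ℝ)+1)*d/2^(n+1)) - (a + ((k:ℕ):ℝ)*d/2^n)| = d/2^(n+1) := by
        rw [hdiff]; exact abs_of_pos hpos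
      have hle1 : |(a + (2*((k:ℕ):ℝ)+1)*d/2^(n+1)) - (a + ((k:ℕ):ℝ)*d/2^n)| ≤ 1 := by
        rw [habs2]
        calc d/2^(n+1) ≤ d := by
              apply div_le_self (le_of_lt hba)
              exact one_le_pow₀ (by norm_num)
          _ ≤ 1 := hd1
      have hb := hC2 _ _ (lam*(4/5)^n/10) (by positivity) hle1
      rw [hSdef]
      refine hb.trans (ENNReal.ofReal_le_ofReal
        (mul_le_mul_of_nonneg_left ?_ (le_max_right _ _)))
      rw [habs2, ← Real.exp_add, Real.exp_le_exp]
      have hg : (0:ℝ) ≤ (4/5:ℝ)^n := by positivity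
      have ht : (0:ℝ) < (2:ℝ)^n := by positivity
      have hr1' := hr1 n
      have s1 : lam^3/200 + (32/25:ℝ)^n/200 ≤ lam^3 * (32/25:ℝ)^n /100 := by
        nlinarith [mul_nonneg (sub_nonneg.mpr hlam3) (sub_nonneg.mpr hr1'),
          mul_le_mul_of_nonneg_left hr1' (le_trans (by norm_num) hlam3)]
      have s2 : lam^3 * (32/25:ℝ)^n / 100 ≤ lam^2 * d⁻¹ * (32/25:ℝ)^n / 100 := by
        have h31 : lam^3 = lam^2 * lam := by ring
        have := mul_le_mul_of_nonneg_left hdlam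
          (show (0:ℝ) ≤ lam^2 * (32/25:ℝ)^n / 100 by positivity)
        nlinarith [this]
      have s3 : lam^2 * d⁻¹ * (32/25:ℝ)^n / 100
          = (lam*(4/5)^n/10)^2/(2*(d/2^(n+1))) := by
        rw [← e1 n, pow_succ]
        field_simp
        ring
      have hfin : lam^3/200 + (32/25:ℝ)^n/200 ≤ (lam*(4/5)^n/10)^2/(2*(d/2^(n+1))) := by
        rw [← s3]; linarith
      have heq : -((lam*(4/5)^n/10)^2)/(2*(d/2^(n+1)))
          = -((lam*(4/5)^n/10)^2/(2*(d/2^(n+1)))) := by ring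
      rw [heq]
      linarith
    -- union bound
    have hUB : P {ω | ∃ x ∈ Set.Icc a b, lam < |q x ω|} ≤
        P A + P B + ∑' n : ℕ, ∑' k : Fin (2^n), P (S n k) :=
      (measure_mono hincl).trans ((measure_union_le _ _).trans
        (add_le_add (measure_union_le _ _)
          ((measure_iUnion_le _).trans (ENNReal.tsum_le_tsum fun n => measure_iUnion_le _))))
    have hsum1 : ∀ n : ℕ, ∑' k : Fin (2^n), P (S n k) ≤
        (2:ℝ≥0∞)^n * ENNReal.ofReal (max C₂ 0 * (Real.exp (-(lam^3)/200) *
          Real.exp (-((32/25:ℝ)^n)/200))) := by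
      intro n
      rw [tsum_fintype]
      calc ∑ k : Fin (2^n), P (S n k)
          ≤ (Finset.univ : Finset (Fin (2^n))).card •
            ENNReal.ofReal (max C₂ 0 * (Real.exp (-(lam^3)/200) *
              Real.exp (-((32/25:ℝ)^n)/200))) :=
            Finset.sum_le_card_nsmul _ _ _ (fun k _ => hPS n k)
        _ = (2:ℝ≥0∞)^n * ENNReal.ofReal (max C₂ 0 * (Real.exp (-(lam^3)/200) *
              Real.exp (-((32/25:ℝ)^n)/200))) := by
            rw [Finset.card_univ, Fintype.card_fin, nsmul_eq_mul]
            congr 1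
            push_cast
            rfl
    have hsum2 : ∑' n : ℕ, (2:ℝ≥0∞)^n * ENNReal.ofReal (max C₂ 0 *
          (Real.exp (-(lam^3)/200) * Real.exp (-((32/25:ℝ)^n)/200)))
        ≤ ENNReal.ofReal (max C₂ 0 * K * Real.exp (-c*lam^3)) := by
      have hterm : ∀ n : ℕ, (2:ℝ≥0∞)^n * ENNReal.ofReal (max C₂ 0 *
            (Real.exp (-(lam^3)/200) * Real.exp (-((32/25:ℝ)^n)/200)))
          ≤ ENNReal.ofReal ((max C₂ 0 * Real.exp (-(lam^3)/200) * 216000000) *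
              (15625/16384:ℝ)^n) := by
        intro n
        have h2e : (2:ENNReal)^n = ENNReal.ofReal ((2:ℝ)^n) := by
          rw [ENNReal.ofReal_pow (by norm_num : (0:ℝ) ≤ 2), ENNReal.ofReal_ofNat]
        rw [h2e, ← ENNReal.ofReal_mul (by positivity)]
        apply ENNReal.ofReal_le_ofReal
        calc (2:ℝ)^n * (max C₂ 0 * (Real.exp (-(lam^3)/200) * Real.exp (-((32/25:ℝ)^n)/200)))
            = (max C₂ 0 * Real.exp (-(lam^3)/200)) *
              ((2:ℝ)^n * Real.exp (-((32/25:ℝ)^n/200))) := by ring_nf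
          _ ≤ (max C₂ 0 * Real.exp (-(lam^3)/200)) * (216000000 * (15625/16384:ℝ)^n) :=
              mul_le_mul_of_nonneg_left (geom_dom n) (by positivity)
          _ = (max C₂ 0 * Real.exp (-(lam^3)/200) * 216000000) * (15625/16384:ℝ)^n := by
              ring
      refine (ENNReal.tsum_le_tsum hterm).trans ?_
      have hsummable : Summable (fun n : ℕ => (max C₂ 0 * Real.exp (-(lam^3)/200) * 216000000) *
          (15625/16384:ℝ)^n) :=
        (summable_geometric_of_lt_one (by norm_num) (by norm_num)).mul_left _
      rw [← ENNReal.ofReal_tsum_of_nonneg (fun n => by positivity) hsummable]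
      apply ENNReal.ofReal_le_ofReal
      rw [tsum_mul_left, tsum_geometric_of_lt_one (by norm_num) (by norm_num)]
      have hee : Real.exp (-(lam^3)/200) ≤ Real.exp (-c*lam^3) := by
        rw [Real.exp_le_exp]
        linarith [mul_le_mul_of_nonneg_right (min_le_right (ε/64) (1/200:ℝ))
          (le_of_lt (pow_pos hlam0 3))]
      calc (max C₂ 0 * Real.exp (-(lam^3)/200) * 216000000) * (1 - (15625/16384:ℝ))⁻¹
          = (max C₂ 0 * K) * Real.exp (-(lam^3)/200) := by rw [hKdef]; ring
        _ ≤ (max C₂ 0 * K) * Real.exp (-c*lam^3) :=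
            mul_le_mul_of_nonneg_left hee (by positivity)
    calc P {ω | ∃ x ∈ Set.Icc a b, lam < |q x ω|}
        ≤ P A + P B + ∑' n : ℕ, ∑' k : Fin (2^n), P (S n k) := hUB
      _ ≤ ENNReal.ofReal (max C₁ 0 * Real.exp (-c*lam^3)) +
          ENNReal.ofReal (max C₂ 0 * Real.exp (-c*lam^3)) +
          ENNReal.ofReal (max C₂ 0 * K * Real.exp (-c*lam^3)) :=
          add_le_add (add_le_add hPA hPB)
            ((ENNReal.tsum_le_tsum hsum1).trans hsum2)
      _ = ENNReal.ofReal (max C₁ 0 * Real.exp (-c*lam^3) +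
          max C₂ 0 * Real.exp (-c*lam^3) + max C₂ 0 * K * Real.exp (-c*lam^3)) := by
          rw [← ENNReal.ofReal_add (by positivity) (by positivity),
            ← ENNReal.ofReal_add (by positivity) (by positivity)]
      _ ≤ ENNReal.ofReal ((max C₁ 0 + max C₂ 0 * (1 + K)) * Real.exp (-c * lam^3)) := by
          apply ENNReal.ofReal_le_ofReal
          ring_nf
          linarith [Real.exp_pos (-c*lam^3)]
end

section
/- Let H be a one-parameter group {Φ_κ(t)}_{κ ∈ 2^ℕ} of measure-preserving transformations of a Polish probability space Q, and suppose that for each t ∈ ℝ, Φ_κ(t, q) converges almost surely as κ → ∞ to some Φ(t, q). Then each Φ(t) is measure-preserving and for all s, t ∈ ℝ, Φ(t + s, q) = Φ(t)(Φ(s, q)) almost surely. -/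
/-!
Composition with a measure-preserving map is an isometry of `L¹`. If `gₙ → g` almost everywhere
and all these maps preserve `μ`, then `G ∘ gₙ → G ∘ g` in `L¹` for bounded continuous `G`
(Vitali: the `G ∘ gₙ` are identically distributed, hence uniformly integrable), and therefore
for every `F ∈ L¹` by density of bounded continuous functions and equicontinuity of the
isometries `F ↦ F ∘ gₙ`. Passing to the limit in `F ∘ Φₙ(t + s) = (F ∘ Φₙ(t)) ∘ Φₙ(s)` gives
`F ∘ Φ(t + s) = F ∘ Φ(t) ∘ Φ(s)` in `L¹` for all `F`; indicators of a countable separating family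
of Borel sets then force `Φ(t + s) = Φ(t) ∘ Φ(s)` almost everywhere. That `Φ(t)` preserves `μ` is
uniqueness of limits in distribution.
-/

open MeasureTheory Filter Topology ProbabilityTheory
open scoped ENNReal

namespace MeasureTheory

variable {X Y : Type*} [MeasurableSpace X] [MeasurableSpace Y] {μ : Measure X} {ν : Measure Y}
  {g : ℕ → X → Y} {g₀ : X → Y}

theorem MeasurePreserving.of_ae_tendsto [TopologicalSpace Y] [BorelSpace Y]
    [HasOuterApproxClosed Y] [IsProbabilityMeasure μ]
    (hg : ∀ n, MeasurePreserving (g n) μ ν) (hg₀ : Measurable g₀)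
    (hlim : ∀ᵐ x ∂μ, Tendsto (g · x) atTop (𝓝 (g₀ x))) :
    MeasurePreserving g₀ μ ν := by
  have : IsProbabilityMeasure ν :=
    (hg 0).map_eq ▸ Measure.isProbabilityMeasure_map (hg 0).aemeasurable
  have hident : ∀ n, IdentDistrib (g n) id μ ν := fun n =>
    ⟨(hg n).aemeasurable, aemeasurable_id, by rw [(hg n).map_eq, Measure.map_id]⟩
  have hlaw := tendstoInDistribution_unique g
    (tendstoInDistribution_of_ae_tendsto (fun n => (hg n).aemeasurable) hg₀.aemeasurable hlim)
    (tendstoInDistribution_of_identDistrib (l := atTop) 0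
      (fun n => (hident 0).trans (hident n).symm) (hident 0))
  exact ⟨hg₀, by simpa using hlaw⟩

variable {E : Type*} [NormedAddCommGroup E] {p : ℝ≥0∞}

theorem _root_.BoundedContinuousFunction.tendsto_eLpNorm_comp_sub_of_ae_tendsto
    [TopologicalSpace Y] [BorelSpace Y] [SecondCountableTopologyEither Y E] [IsFiniteMeasure ν]
    (hp : 1 ≤ p) (hp' : p ≠ ∞)
    (hg : ∀ n, MeasurePreserving (g n) μ ν) (hg₀ : MeasurePreserving g₀ μ ν)
    (hlim : ∀ᵐ x ∂μ, Tendsto (g · x) atTop (𝓝 (g₀ x))) (G : BoundedContinuousFunction Y E) :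
    Tendsto (fun n => eLpNorm (G ∘ g n - G ∘ g₀) p μ) atTop (𝓝 0) := by
  borelize E
  have : IsFiniteMeasure (μ.map g₀) := hg₀.map_eq ▸ inferInstance
  have : IsFiniteMeasure μ := Measure.isFiniteMeasure_of_map hg₀.aemeasurable
  have hG : MemLp G p ν := G.memLp_top.mono_exponent le_top
  have hident : ∀ n, IdentDistrib (G ∘ g n) (G ∘ g 0) μ μ := fun n =>
    (IdentDistrib.mk (hg n).aemeasurable (hg 0).aemeasurable
      ((hg n).map_eq.trans (hg 0).map_eq.symm)).comp G.continuous.measurable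
  have hui : UnifIntegrable (fun n => G ∘ g n) p μ :=
    (MemLp.uniformIntegrable_of_identDistrib (f := fun n => G ∘ g n) hp hp'
      (hG.comp_measurePreserving (hg 0)) hident).2.1
  refine tendsto_Lp_finite_of_tendsto_ae hp hp' (fun n => (hG.comp_measurePreserving (hg n)).1)
    (hG.comp_measurePreserving hg₀) hui ?_
  filter_upwards [hlim] with x hx using (G.continuous.tendsto _).comp hx

section Density

variable [TopologicalSpace Y] [NormalSpace Y] [BorelSpace Y] [SecondCountableTopologyEither Y E]
  [NormedSpace ℝ E] [IsFiniteMeasure ν] [ν.WeaklyRegular] [Fact (1 ≤ p)]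

theorem Lp.tendsto_compMeasurePreserving_of_ae_tendsto (hp : p ≠ ∞)
    (hg : ∀ n, MeasurePreserving (g n) μ ν) (hg₀ : MeasurePreserving g₀ μ ν)
    (hlim : ∀ᵐ x ∂μ, Tendsto (g · x) atTop (𝓝 (g₀ x))) (F : Lp E p ν) :
    Tendsto (fun n => Lp.compMeasurePreserving (g n) (hg n) F) atTop
      (𝓝 (Lp.compMeasurePreserving g₀ hg₀ F)) := by
  have hequi : Equicontinuous fun n => Lp.compMeasurePreserving (E := E) (p := p) (g n) (hg n) :=
    (LipschitzWith.uniformEquicontinuous _ 1 fun n =>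
      (Lp.isometry_compMeasurePreserving (hg n)).lipschitz).equicontinuous
  refine (BoundedContinuousFunction.toLp_denseRange (E := E) (μ := ν) ℝ hp).induction_on F
    (hequi.isClosed_setOfPred_tendsto (Lp.isometry_compMeasurePreserving hg₀).continuous)
    fun G => ?_
  rw [Lp.tendsto_Lp_iff_tendsto_eLpNorm']
  refine (G.tendsto_eLpNorm_comp_sub_of_ae_tendsto Fact.out hp hg hg₀ hlim).congr fun n => ?_
  have hcomp : ∀ {h : X → Y} (hh : MeasurePreserving h μ ν),
      Lp.compMeasurePreserving h hh (BoundedContinuousFunction.toLp p ν ℝ G) =ᵐ[μ] G ∘ h :=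
    fun hh => (Lp.coeFn_compMeasurePreserving _ hh).trans
      (hh.quasiMeasurePreserving.ae_eq_comp (BoundedContinuousFunction.coeFn_toLp p ν ℝ G))
  exact eLpNorm_congr_ae ((hcomp (hg n)).sub (hcomp hg₀)).symm

theorem _root_.Filter.Tendsto.compMeasurePreservingLp_of_ae_tendsto
    {F : ℕ → Lp E p ν} {F₀ : Lp E p ν} (hF : Tendsto F atTop (𝓝 F₀)) (hp : p ≠ ∞)
    (hg : ∀ n, MeasurePreserving (g n) μ ν) (hg₀ : MeasurePreserving g₀ μ ν)
    (hlim : ∀ᵐ x ∂μ, Tendsto (g · x) atTop (𝓝 (g₀ x))) :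
    Tendsto (fun n => Lp.compMeasurePreserving (g n) (hg n) (F n)) atTop
      (𝓝 (Lp.compMeasurePreserving g₀ hg₀ F₀)) := by
  have hF₀ := Lp.tendsto_compMeasurePreserving_of_ae_tendsto hp hg hg₀ hlim F₀
  rw [tendsto_iff_dist_tendsto_zero] at hF hF₀ ⊢
  refine squeeze_zero (fun n => dist_nonneg) (fun n => ?_) (by simpa using hF.add hF₀)
  set T := fun n => Lp.compMeasurePreserving (E := E) (p := p) (g n) (hg n)
  calc dist (T n (F n)) (Lp.compMeasurePreserving g₀ hg₀ F₀)
      ≤ dist (T n (F n)) (T n F₀) + dist (T n F₀) (Lp.compMeasurePreserving g₀ hg₀ F₀) :=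
        dist_triangle _ _ _
    _ = dist (F n) F₀ + dist (T n F₀) (Lp.compMeasurePreserving g₀ hg₀ F₀) := by
        rw [(Lp.isometry_compMeasurePreserving (hg n)).dist_eq]

end Density

theorem Lp.ae_eq_of_forall_compMeasurePreserving_eq [MeasurableSpace.CountablySeparated Y]
    [IsFiniteMeasure ν] [Nontrivial E] {h₁ h₂ : X → Y}
    (hh₁ : MeasurePreserving h₁ μ ν) (hh₂ : MeasurePreserving h₂ μ ν)
    (h : ∀ F : Lp E p ν, Lp.compMeasurePreserving h₁ hh₁ F = Lp.compMeasurePreserving h₂ hh₂ F) :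
    h₁ =ᵐ[μ] h₂ := by
  obtain ⟨c, hc⟩ := exists_ne (0 : E)
  refine EventuallyEq.of_forall_separating_preimage MeasurableSet fun A hA => ?_
  have hfin : ∀ {h' : X → Y}, MeasurePreserving h' μ ν → μ (h' ⁻¹' A) ≠ ∞ := fun hh' => by
    rw [hh'.measure_preimage hA.nullMeasurableSet]
    exact measure_ne_top ν A
  exact (indicatorConstLp_inj (hA.preimage hh₁.measurable) (hfin hh₁)
    (hA.preimage hh₂.measurable) (hfin hh₂) hc).1
      (h (indicatorConstLp p hA (measure_ne_top ν A) c))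

end MeasureTheory

theorem stmt10_general {Q : Type*} [TopologicalSpace Q] [PolishSpace Q]
    [MeasurableSpace Q] [BorelSpace Q]
    (μ : Measure Q) [IsProbabilityMeasure μ]
    (Φ : ℕ → ℝ → Q → Q)
    (hmp : ∀ n t, MeasurePreserving (Φ n t) μ μ)
    (hgroup : ∀ n (s t : ℝ) (q : Q), Φ n (t + s) q = Φ n t (Φ n s q))
    (Φlim : ℝ → Q → Q) (hΦlimMeas : ∀ t, Measurable (Φlim t))
    (hconv : ∀ t : ℝ, ∀ᵐ q ∂μ,
      Filter.Tendsto (fun n => Φ n t q) Filter.atTop (nhds (Φlim t q))) :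
    (∀ t : ℝ, MeasurePreserving (Φlim t) μ μ) ∧
    (∀ s t : ℝ, ∀ᵐ q ∂μ, Φlim (t + s) q = Φlim t (Φlim s q)) := by
  have hmpLim : ∀ t, MeasurePreserving (Φlim t) μ μ := fun t =>
    MeasurePreserving.of_ae_tendsto (hmp · t) (hΦlimMeas t) (hconv t)
  refine ⟨hmpLim, fun s t => ?_⟩
  have hlimL1 : ∀ r (F : Lp ℝ 1 μ), Tendsto (fun n => Lp.compMeasurePreserving _ (hmp n r) F)
      atTop (𝓝 (Lp.compMeasurePreserving _ (hmpLim r) F)) := fun r =>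
    Lp.tendsto_compMeasurePreserving_of_ae_tendsto ENNReal.one_ne_top (hmp · r) (hmpLim r)
      (hconv r)
  refine Lp.ae_eq_of_forall_compMeasurePreserving_eq (E := ℝ) (p := 1) (h₂ := Φlim t ∘ Φlim s)
    (hmpLim (t + s)) ((hmpLim t).comp (hmpLim s)) fun F => ?_
  rw [Lp.compMeasurePreserving_comp_apply F (hmpLim t) (hmpLim s)]
  refine tendsto_nhds_unique ((hlimL1 (t + s) F).congr fun n => ?_)
    ((hlimL1 t F).compMeasurePreservingLp_of_ae_tendsto ENNReal.one_ne_top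
      (hmp · s) (hmpLim s) (hconv s))
  rw [← Lp.compMeasurePreserving_comp_apply]
  congr
  exact funext (hgroup n s t)

/-- An almost-sure limit of one-parameter groups of measure-preserving
transformations of a Polish probability space is again measure-preserving and
satisfies the group property almost surely. -/
theorem stmt10 {Q : Type*} [TopologicalSpace Q] [PolishSpace Q]
    [MeasurableSpace Q] [BorelSpace Q]
    (μ : Measure Q) [IsProbabilityMeasure μ]
    (Φ : ℕ → ℝ → Q → Q)
    (hmp : ∀ n t, MeasurePreserving (Φ n t) μ μ)
    (hgroup : ∀ n (s t : ℝ) (q : Q), Φ n (t + s) q = Φ n t (Φ n s q))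
    (hid : ∀ n (q : Q), Φ n 0 q = q)
    (Φlim : ℝ → Q → Q) (hΦlimMeas : ∀ t, Measurable (Φlim t))
    (hconv : ∀ t : ℝ, ∀ᵐ q ∂μ,
      Filter.Tendsto (fun n => Φ n t q) Filter.atTop (nhds (Φlim t q))) :
    (∀ t : ℝ, MeasurePreserving (Φlim t) μ μ) ∧
    (∀ s t : ℝ, ∀ᵐ q ∂μ, Φlim (t + s) q = Φlim t (Φlim s q)) :=
  stmt10_general μ Φ hmp hgroup Φlim hΦlimMeas hconv
end

section
/- Let q : ℝ → ℝ be continuous and suppose y, ỹ are positive continuous distributional solutions of y'' = w y with the same potential w = q' + q² (a distribution) and y(0) = ỹ(0) = 1, where y(x) = exp(∫₀ˣ q). If moreover limsup_{x→∞} ∫₀ˣ y(s)⁻² ds = ∞ and limsup_{x→−∞} ∫ₓ⁰ y(s)⁻² ds = ∞, and ỹ(x) = y(x)[1 + c∫₀ˣ y(s)⁻² ds] for some c ∈ ℝ, then c = 0 and ỹ = y. -/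
open Filter

/-- Reduction-of-order uniqueness for the Miura map: if `y(x) = exp(∫₀ˣ q)` and
`ỹ` is a positive continuous function with `ỹ(0) = 1` of the form
`ỹ = y[1 + c ∫₀ˣ y⁻²]`, and the integrals `∫₀ˣ y⁻²` and `∫ₓ⁰ y⁻²` are unbounded
as `x → ∞` and `x → −∞` respectively, then `c = 0` and `ỹ = y`. -/
theorem stmt19 (q : ℝ → ℝ) (hq : Continuous q)
    (y ytil : ℝ → ℝ) (c : ℝ)
    (hy : ∀ x : ℝ, y x = Real.exp (∫ s in (0:ℝ)..x, q s))
    (hytilcont : Continuous ytil) (hytilpos : ∀ x, 0 < ytil x) (hytil0 : ytil 0 = 1)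
    (hform : ∀ x : ℝ, ytil x = y x * (1 + c * ∫ s in (0:ℝ)..x, ((y s) ^ 2)⁻¹))
    (hdivp : ∀ M : ℝ, ∃ᶠ x in atTop, M ≤ ∫ s in (0:ℝ)..x, ((y s) ^ 2)⁻¹)
    (hdivm : ∀ M : ℝ, ∃ᶠ x in atBot, M ≤ ∫ s in x..(0:ℝ), ((y s) ^ 2)⁻¹) :
    c = 0 ∧ ytil = y := by
  have hypos : ∀ x, 0 < y x := fun x => (hy x) ▸ Real.exp_pos _
  have hpos : ∀ x, 0 < 1 + c * ∫ s in (0:ℝ)..x, ((y s) ^ 2)⁻¹ := by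
    intro x
    have := hytilpos x
    rw [hform x] at this
    by_contra hne
    push_neg at hne
    have h2 : ytil x ≤ 0 := by
      rw [hform x]; exact mul_nonpos_of_nonneg_of_nonpos (hypos x).le hne
    linarith [hytilpos x]
  have hc : c = 0 := by
    rcases lt_trichotomy c 0 with h | h | h
    · exfalso
      obtain ⟨x, hx⟩ := ((hdivp (1 / (-c) + 1)).and_eventually (eventually_ge_atTop 0)).exists
      have := hpos x
      have hI : 1 / (-c) + 1 ≤ ∫ s in (0:ℝ)..x, ((y s) ^ 2)⁻¹ := hx.1
      have h1 : c * (∫ s in (0:ℝ)..x, ((y s) ^ 2)⁻¹) ≤ c * (1 / (-c) + 1) :=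
        mul_le_mul_of_nonpos_left hI h.le
      have h2 : c * (1 / (-c) + 1) = -1 + c := by field_simp [h.ne]
      linarith
    · exact h
    · exfalso
      obtain ⟨x, hx⟩ := ((hdivm (1 / c + 1)).and_eventually (eventually_le_atBot 0)).exists
      have hsym : (∫ s in (0:ℝ)..x, ((y s) ^ 2)⁻¹) = -∫ s in x..(0:ℝ), ((y s) ^ 2)⁻¹ :=
        intervalIntegral.integral_symm x 0
      have := hpos x
      rw [hsym] at this
      have h1 : c * (-∫ s in x..(0:ℝ), ((y s) ^ 2)⁻¹) ≤ c * (-(1 / c + 1)) := by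
        have := hx.1; nlinarith
      have h2 : c * (-(1 / c + 1)) = -1 - c := by field_simp [h.ne']; ring
      linarith
  refine ⟨hc, funext fun x => ?_⟩
  rw [hform x, hc]
  ring
end
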